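/- Let A and B be thin groupoids, T ∈ U_{A⊸B}, and 𝐒 ⊆ T_A a class of prestrategies with 𝐒⫫⫫ = T_A. Then T ∈ T_{A⊸B} if and only if for all S ∈ 𝐒 the application T@S belongs to T_B. -/

import Mathlib

open CategoryTheory

universe u

namespace ThinSpan

variable {S T B : Type u} [Groupoid.{u} S] [Groupoid.{u} T] [Groupoid.{u} B]

/-- The (strict) pullback groupoid of a cospan of groupoids: objects are pairs
`(s, t)` with `f.obj s = g.obj t`. -/
structure PB (f : S ⥤ B) (g : T ⥤ B) : Type u where
  s : S
  t : T
  eq : f.obj s = g.obj t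

namespace PB

variable {f : S ⥤ B} {g : T ⥤ B}

/-- Morphisms of the pullback groupoid: pairs `(φ, ψ)` with `f.map φ = g.map ψ`
(modulo the identifications of the endpoints). -/
@[ext]
structure Hom (x y : PB f g) : Type u where
  l : x.s ⟶ y.s
  r : x.t ⟶ y.t
  comm : f.map l ≫ eqToHom y.eq = eqToHom x.eq ≫ g.map r

instance category : Category.{u} (PB f g) where
  Hom := Hom
  id x := ⟨𝟙 x.s, 𝟙 x.t, by simp⟩
  comp u v := ⟨u.l ≫ v.l, u.r ≫ v.r, by
    rw [Functor.map_comp, Functor.map_comp, Category.assoc, v.comm, ← Category.assoc,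
      u.comm, Category.assoc]⟩
  id_comp u := by apply Hom.ext <;> simp
  comp_id u := by apply Hom.ext <;> simp
  assoc u v w := by apply Hom.ext <;> simp

@[simp] theorem id_l (x : PB f g) : (𝟙 x : Hom x x).l = 𝟙 x.s := rfl
@[simp] theorem id_r (x : PB f g) : (𝟙 x : Hom x x).r = 𝟙 x.t := rfl
@[simp] theorem comp_l {x y z : PB f g} (u : x ⟶ y) (v : y ⟶ z) :
    (u ≫ v : Hom x z).l = u.l ≫ v.l := rfl
@[simp] theorem comp_r {x y z : PB f g} (u : x ⟶ y) (v : y ⟶ z) :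
    (u ≫ v : Hom x z).r = u.r ≫ v.r := rfl

instance groupoid : Groupoid.{u} (PB f g) where
  inv u := ⟨Groupoid.inv u.l, Groupoid.inv u.r, by
    rw [Groupoid.inv_eq_inv, Groupoid.inv_eq_inv, Functor.map_inv, Functor.map_inv,
      IsIso.inv_comp_eq, ← Category.assoc, IsIso.eq_comp_inv]
    exact u.comm.symm⟩
  inv_comp u := by apply Hom.ext <;> simp [Groupoid.inv_eq_inv]
  comp_inv u := by apply Hom.ext <;> simp [Groupoid.inv_eq_inv]

/-- First projection of the pullback groupoid. -/
def pl (f : S ⥤ B) (g : T ⥤ B) : PB f g ⥤ S where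
  obj x := x.s
  map u := u.l

/-- Second projection of the pullback groupoid. -/
def pr (f : S ⥤ B) (g : T ⥤ B) : PB f g ⥤ T where
  obj x := x.t
  map u := u.r

end PB

/-- The bipullback condition for a cospan of groupoids: every "reindexing problem"
`θ : f s ⟶ g t` has a solution. -/
def BipullbackCond (f : S ⥤ B) (g : T ⥤ B) : Prop :=
  ∀ (s : S) (t : T) (θ : f.obj s ⟶ g.obj t),
    ∃ (s' : S) (t' : T) (φ : s ⟶ s') (ψ : t' ⟶ t) (e : f.obj s' = g.obj t'),
      θ = f.map φ ≫ eqToHom e ≫ g.map ψ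



/-- A prestrategy on a groupoid `A`: a groupoid together with a display functor to `A`. -/
structure Prestrat (A : Type u) [Groupoid.{u} A] : Type (u + 1) where
  C : Type u
  [grpd : Groupoid.{u} C]
  disp : C ⥤ A

attribute [instance] Prestrat.grpd

variable {A B C : Type u} [Groupoid.{u} A] [Groupoid.{u} B] [Groupoid.{u} C]

/-- Uniform orthogonality of prestrategies: the pullback of the display maps is a
bipullback. -/
def Perp (σ τ : Prestrat A) : Prop :=
  BipullbackCond σ.disp τ.disp

/-- The uniform orthogonal of a set of prestrategies. -/
def perpSet (Ss : Set (Prestrat A)) : Set (Prestrat A) :=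
  {τ | ∀ σ ∈ Ss, Perp σ τ}

/-- The identity prestrategy `(A, id_A)` on `A`. -/
def idPre (A : Type u) [Groupoid.{u} A] : Prestrat A :=
  ⟨A, 𝟭 A⟩

/-- The identity span on `A`, as a prestrategy from `A` to `A`. -/
def idSpan (A : Type u) [Groupoid.{u} A] : Prestrat (A × A) :=
  ⟨A, Functor.prod' (𝟭 A) (𝟭 A)⟩

/-- Product of prestrategies. -/
def prodPre (σ : Prestrat A) (τ : Prestrat B) : Prestrat (A × B) :=
  ⟨σ.C × τ.C, σ.disp.prod τ.disp⟩

/-- The left display component of a prestrategy from `A` to `B`. -/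
def dl (σ : Prestrat (A × B)) : σ.C ⥤ A :=
  σ.disp ⋙ CategoryTheory.Prod.fst A B

/-- The right display component of a prestrategy from `A` to `B`. -/
def dr (σ : Prestrat (A × B)) : σ.C ⥤ B :=
  σ.disp ⋙ CategoryTheory.Prod.snd A B

/-- The set `U_{A ⊸ B}` of uniform prestrategies from `(A, UA)` to `(B, UB)`. -/
def ULin (UA : Set (Prestrat A)) (UB : Set (Prestrat B)) : Set (Prestrat (A × B)) :=
  {τ | ∀ σ ∈ UA, ∀ υ ∈ perpSet UB, Perp τ (prodPre σ υ)}

/-- The application `T @ S` of a prestrategy `T` from `A` to `B` to a prestrategy `S`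
on `A`. -/
def appPre (σ : Prestrat A) (τ : Prestrat (A × B)) : Prestrat B :=
  ⟨PB σ.disp (dl τ), PB.pr σ.disp (dl τ) ⋙ dr τ⟩

/-- The composition `T ⊙ S` of spans/prestrategies. -/
def compPre (σ : Prestrat (A × B)) (τ : Prestrat (B × C)) : Prestrat (A × C) :=
  ⟨PB (dr σ) (dl τ),
    Functor.prod' (PB.pl (dr σ) (dl τ) ⋙ dl σ) (PB.pr (dr σ) (dl τ) ⋙ dr τ)⟩

/-- A wide subgroupoid of a groupoid `A`: a class of morphisms containing identities and
closed under composition and inverses (with all objects of `A`). -/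
structure WideSub (A : Type u) [Groupoid.{u} A] : Type u where
  mem : ∀ {a b : A}, (a ⟶ b) → Prop
  id_mem : ∀ a : A, mem (𝟙 a)
  comp_mem : ∀ {a b c : A} {f : a ⟶ b} {g : b ⟶ c}, mem f → mem g → mem (f ≫ g)
  inv_mem : ∀ {a b : A} {f : a ⟶ b}, mem f → mem (Groupoid.inv f)

namespace WideSub

/-- The underlying type of objects of a wide subgroupoid (the same objects as `A`). -/
@[ext]
structure Obj {A : Type u} [Groupoid.{u} A] (W : WideSub A) : Type u where
  pt : A

variable {A : Type u} [Groupoid.{u} A] (W : WideSub A)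

instance : Groupoid.{u} W.Obj where
  Hom x y := {f : x.pt ⟶ y.pt // W.mem f}
  id x := ⟨𝟙 x.pt, W.id_mem x.pt⟩
  comp u v := ⟨u.1 ≫ v.1, W.comp_mem u.2 v.2⟩
  id_comp u := Subtype.ext (Category.id_comp u.1)
  comp_id u := Subtype.ext (Category.comp_id u.1)
  assoc u v w := Subtype.ext (Category.assoc u.1 v.1 w.1)
  inv u := ⟨Groupoid.inv u.1, W.inv_mem u.2⟩
  inv_comp u := Subtype.ext (Groupoid.inv_comp u.1)
  comp_inv u := Subtype.ext (Groupoid.comp_inv u.1)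

/-- The inclusion functor of a wide subgroupoid. -/
def incl : W.Obj ⥤ A where
  obj x := x.pt
  map u := u.1

/-- The inclusion of a wide subgroupoid, seen as a prestrategy on `A`. -/
def pre : Prestrat A :=
  ⟨W.Obj, W.incl⟩

end WideSub

/-- A groupoid is discrete when all of its morphisms are identities. -/
def IsDiscreteGpd (P : Type u) [Groupoid.{u} P] : Prop :=
  ∀ {x y : P} (u : x ⟶ y), ∃ h : x = y, u = CategoryTheory.eqToHom h

/-- Thin orthogonality: uniform orthogonality together with discreteness of the
pullback groupoid. -/
def TPerp (σ τ : Prestrat A) : Prop :=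
  Perp σ τ ∧ IsDiscreteGpd (PB σ.disp τ.disp)

/-- The thin orthogonal of a class `Ss` of prestrategies, relative to the ambient
uniform structure `U` (so that the result is a subset of `U ⊥`). -/
def tperpSet (U : Set (Prestrat A)) (Ss : Set (Prestrat A)) : Set (Prestrat A) :=
  {τ | τ ∈ perpSet U ∧ ∀ σ ∈ Ss, TPerp σ τ}

/-- The set `T_{A ⊸ B}` of thin prestrategies (strategies) from a thin groupoid
`(A, A₋, A₊, U_A, T_A)` to `(B, B₋, B₊, U_B, T_B)`. -/
def TLin (UA TA : Set (Prestrat A)) (UB TB : Set (Prestrat B)) :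
    Set (Prestrat (A × B)) :=
  {τ | τ ∈ ULin UA UB ∧ ∀ σ ∈ TA, ∀ υ ∈ tperpSet UB TB, TPerp τ (prodPre σ υ)}

end ThinSpan
namespace ThinSpan

section Helpers

variable {S T B : Type u} [Groupoid.{u} S] [Groupoid.{u} T] [Groupoid.{u} B]

theorem bip_symm {f : S ⥤ B} {g : T ⥤ B} (h : BipullbackCond f g) :
    BipullbackCond g f := by
  intro t s θ
  obtain ⟨s', t', φ, ψ, e, hθ⟩ := h s t (Groupoid.inv θ)
  refine ⟨t', s', Groupoid.inv ψ, Groupoid.inv φ, e.symm, ?_⟩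
  have h2 : θ = Groupoid.inv (f.map φ ≫ eqToHom e ≫ g.map ψ) := by
    rw [← hθ]; simp [Groupoid.inv_eq_inv]
  rw [h2]
  simp [Groupoid.inv_eq_inv, Functor.map_inv]

theorem prod_eqToHom_fst {A B : Type u} [Groupoid.{u} A] [Groupoid.{u} B]
    {p q : A × B} (h : p = q) :
    (eqToHom h).1 = eqToHom (congrArg Prod.fst h) := by subst h; simp

theorem prod_eqToHom_snd {A B : Type u} [Groupoid.{u} A] [Groupoid.{u} B]
    {p q : A × B} (h : p = q) :
    (eqToHom h).2 = eqToHom (congrArg Prod.snd h) := by subst h; simp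

theorem prod_eqH {A B : Type u} [Groupoid.{u} A] [Groupoid.{u} B]
    {p q : A × B} (u : p ⟶ q) :
    (∃ h : p = q, u = eqToHom h) ↔
      ((∃ h : p.1 = q.1, u.1 = eqToHom h) ∧ (∃ h : p.2 = q.2, u.2 = eqToHom h)) := by
  constructor
  · rintro ⟨rfl, rfl⟩
    exact ⟨⟨rfl, by simp⟩, ⟨rfl, by simp⟩⟩
  · rintro ⟨⟨h1, hu1⟩, ⟨h2, hu2⟩⟩
    obtain ⟨p1, p2⟩ := p
    obtain ⟨q1, q2⟩ := q
    dsimp at h1 h2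
    subst h1; subst h2
    refine ⟨rfl, ?_⟩
    apply CategoryTheory.Prod.hom_ext <;> simp [hu1, hu2]

theorem PB.eqH {f : S ⥤ B} {g : T ⥤ B} {x y : PB f g} (u : x ⟶ y) :
    (∃ h : x = y, u = eqToHom h) ↔
      ((∃ h : x.s = y.s, u.l = eqToHom h) ∧ (∃ h : x.t = y.t, u.r = eqToHom h)) := by
  constructor
  · rintro ⟨rfl, rfl⟩
    exact ⟨⟨rfl, by simp⟩, ⟨rfl, by simp⟩⟩
  · rintro ⟨⟨h1, hu1⟩, ⟨h2, hu2⟩⟩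
    obtain ⟨xs, xt, xe⟩ := x
    obtain ⟨ys, yt, ye⟩ := y
    dsimp at h1 h2
    subst h1; subst h2
    obtain rfl := Subsingleton.elim xe ye
    refine ⟨rfl, ?_⟩
    apply PB.Hom.ext <;> simp [hu1, hu2]

theorem disc_swap {f : S ⥤ B} {g : T ⥤ B} (h : IsDiscreteGpd (PB f g)) :
    IsDiscreteGpd (PB g f) := by
  intro x y u
  have comm : f.map u.r ≫ eqToHom y.eq.symm = eqToHom x.eq.symm ≫ g.map u.l := by
    rw [comp_eqToHom_iff, Category.assoc, u.comm]
    simp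
  let u' : (⟨x.t, x.s, x.eq.symm⟩ : PB f g) ⟶ ⟨y.t, y.s, y.eq.symm⟩ := ⟨u.r, u.l, comm⟩
  obtain ⟨⟨h1, hl⟩, ⟨h2, hr⟩⟩ := (PB.eqH u').mp (h u')
  exact (PB.eqH u).mpr ⟨⟨h2, hr⟩, ⟨h1, hl⟩⟩

theorem perp_idPre {A : Type u} [Groupoid.{u} A] (σ : Prestrat A) :
    Perp σ (idPre A) := by
  intro s b θ
  exact ⟨s, σ.disp.obj s, 𝟙 s, θ, rfl, by simp [idPre]; rfl⟩

theorem idPre_mem_perpSet {A : Type u} [Groupoid.{u} A] (U : Set (Prestrat A)) :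
    idPre A ∈ perpSet U := fun σ _ => perp_idPre σ

end Helpers


section Main

variable {A B : Type u} [Groupoid.{u} A] [Groupoid.{u} B]

/-- Generic flip of a commuting square along eqToHoms. -/
theorem comm_flip {C : Type u} [Groupoid.{u} C] {a b c d : C}
    (f : a ⟶ b) (g : c ⟶ d) (p : c = a) (q : d = b)
    (h : g ≫ eqToHom q = eqToHom p ≫ f) :
    f ≫ eqToHom q.symm = eqToHom p.symm ≫ g := by
  have hg : g = eqToHom p ≫ f ≫ eqToHom q.symm := by
    rw [← Category.assoc, ← h]; simp
  rw [hg]; simp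

/-- The co-application of `τ` to a prestrategy on `B`. -/
def coPre (υ : Prestrat B) (τ : Prestrat (A × B)) : Prestrat A :=
  ⟨PB υ.disp (dr τ), PB.pr υ.disp (dr τ) ⋙ dl τ⟩

theorem app_perp_of_perp (σ : Prestrat A) (υ : Prestrat B) (τ : Prestrat (A × B))
    (h : Perp τ (prodPre σ υ)) : Perp (appPre σ τ) υ := by
  show BipullbackCond (PB.pr σ.disp (dl τ) ⋙ dr τ) υ.disp
  intro x v θ
  obtain ⟨t', sv, φ, ψ, e, hθ⟩ := (show BipullbackCond τ.disp (σ.disp.prod υ.disp) from h) x.t (x.s, v) (⟨eqToHom x.eq.symm, θ⟩)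
  have hA := congrArg Prod.fst hθ
  have hB := congrArg Prod.snd hθ
  simp [prodPre, prod_eqToHom_fst, prod_eqToHom_snd] at hA hB
  refine ⟨⟨sv.1, t', (congrArg Prod.fst e).symm⟩, sv.2,
    ⟨Groupoid.inv ψ.1, φ, ?_⟩, ψ.2, congrArg Prod.snd e, ?_⟩
  · have hS : σ.disp.map ψ.1 =
        CategoryTheory.inv (eqToHom (congrArg Prod.fst e)) ≫
          CategoryTheory.inv ((τ.disp.map φ).1) ≫ eqToHom x.eq.symm := by
      rw [IsIso.eq_inv_comp, IsIso.eq_inv_comp]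
      exact hA.symm
    show σ.disp.map (Groupoid.inv ψ.1) ≫ eqToHom (congrArg Prod.fst e).symm
        = eqToHom x.eq ≫ (τ.disp.map φ).1
    rw [Groupoid.inv_eq_inv, Functor.map_inv, IsIso.inv_comp_eq, hS]
    simp
    erw [eqToHom_trans_assoc, eqToHom_refl, Category.id_comp, IsIso.inv_hom_id, Category.comp_id]
  · exact hB

theorem co_perp_of_perp (σ : Prestrat A) (υ : Prestrat B) (τ : Prestrat (A × B))
    (h : Perp τ (prodPre σ υ)) : Perp (coPre υ τ) σ := by
  show BipullbackCond (PB.pr υ.disp (dr τ) ⋙ dl τ) σ.disp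
  intro x s θ
  obtain ⟨t', sv, φ, ψ, e, hθ⟩ := (show BipullbackCond τ.disp (σ.disp.prod υ.disp) from h) x.t (s, x.s) (⟨θ, eqToHom x.eq.symm⟩)
  have hA := congrArg Prod.fst hθ
  have hB := congrArg Prod.snd hθ
  simp [prodPre, prod_eqToHom_fst, prod_eqToHom_snd] at hA hB
  refine ⟨⟨sv.2, t', (congrArg Prod.snd e).symm⟩, sv.1,
    ⟨Groupoid.inv ψ.2, φ, ?_⟩, ψ.1, congrArg Prod.fst e, ?_⟩
  · have hS : υ.disp.map ψ.2 =
        CategoryTheory.inv (eqToHom (congrArg Prod.snd e)) ≫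
          CategoryTheory.inv ((τ.disp.map φ).2) ≫ eqToHom x.eq.symm := by
      rw [IsIso.eq_inv_comp, IsIso.eq_inv_comp]
      exact hB.symm
    show υ.disp.map (Groupoid.inv ψ.2) ≫ eqToHom (congrArg Prod.snd e).symm
        = eqToHom x.eq ≫ (τ.disp.map φ).2
    rw [Groupoid.inv_eq_inv, Functor.map_inv, IsIso.inv_comp_eq, hS]
    simp
    erw [eqToHom_trans_assoc, eqToHom_refl, Category.id_comp, IsIso.inv_hom_id, Category.comp_id]
  · exact hA

theorem dl_bip (σ : Prestrat A) (τ : Prestrat (A × B))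
    (h : Perp τ (prodPre σ (idPre B))) : BipullbackCond (dl τ) σ.disp := by
  intro t s θ
  obtain ⟨t', sb, φ, ψ, e, hθ⟩ := (show BipullbackCond τ.disp (σ.disp.prod (𝟭 B)) from h) t (s, (τ.disp.obj t).2) (⟨θ, 𝟙 _⟩)
  have hA := congrArg Prod.fst hθ
  simp [prodPre, idPre, prod_eqToHom_fst] at hA
  exact ⟨t', sb.1, φ, ψ.1, congrArg Prod.fst e, hA⟩

theorem dr_bip (υ : Prestrat B) (τ : Prestrat (A × B))
    (h : Perp τ (prodPre (idPre A) υ)) : BipullbackCond (dr τ) υ.disp := by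
  intro t v θ
  obtain ⟨t', av, φ, ψ, e, hθ⟩ := (show BipullbackCond τ.disp ((𝟭 A).prod υ.disp) from h) t ((τ.disp.obj t).1, v) (⟨𝟙 _, θ⟩)
  have hB := congrArg Prod.snd hθ
  simp [prodPre, idPre, prod_eqToHom_snd] at hB
  exact ⟨t', av.2, φ, ψ.2, congrArg Prod.snd e, hB⟩

theorem perp_of_app_perp (σ : Prestrat A) (υ : Prestrat B) (τ : Prestrat (A × B))
    (hb : BipullbackCond (dl τ) σ.disp) (h : Perp (appPre σ τ) υ) :
    Perp τ (prodPre σ υ) := by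
  show BipullbackCond τ.disp (σ.disp.prod υ.disp)
  intro t sv θ
  obtain ⟨t1, s1, φ1, ψ1, e1, hθ1⟩ := hb t sv.1 θ.1
  obtain ⟨x2, v2, Φ, ψ2, eB, hθ2⟩ :=
    (show BipullbackCond (PB.pr σ.disp (dl τ) ⋙ dr τ) υ.disp from h) ⟨s1, t1, e1.symm⟩ sv.2 (CategoryTheory.inv (X := (τ.disp.obj t).2) (Y := (τ.disp.obj t1).2) (τ.disp.map φ1).2 ≫ θ.2)
  simp only [appPre, dr, PB.pr, Functor.comp_map] at hθ2
  rw [IsIso.inv_comp_eq] at hθ2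
  have hTr : (τ.disp.map Φ.r).1 = eqToHom e1 ≫ σ.disp.map Φ.l ≫ eqToHom x2.eq := by
    rw [Φ.comm]; simp [dl]
    erw [eqToHom_trans_assoc, eqToHom_refl, Category.id_comp]
  refine ⟨x2.t, (x2.s, v2), φ1 ≫ Φ.r, (Groupoid.inv Φ.l ≫ ψ1, ψ2),
    Prod.ext x2.eq.symm eB, ?_⟩
  apply CategoryTheory.Prod.hom_ext
  · simp only [prod_comp_fst, prod_eqToHom_fst, Functor.map_comp, prodPre, Functor.prod_map]
    rw [hθ1, hTr]
    simp [Groupoid.inv_eq_inv, Functor.map_inv, dl]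
    erw [eqToHom_trans_assoc, eqToHom_refl, Category.id_comp, IsIso.hom_inv_id_assoc]
  · simp only [prod_comp_snd, prod_eqToHom_snd, Functor.map_comp, prodPre, Functor.prod_map]
    rw [hθ2]
    simp [dr]

theorem perp_of_co_perp (σ : Prestrat A) (υ : Prestrat B) (τ : Prestrat (A × B))
    (hb : BipullbackCond (dr τ) υ.disp) (h : Perp (coPre υ τ) σ) :
    Perp τ (prodPre σ υ) := by
  show BipullbackCond τ.disp (σ.disp.prod υ.disp)
  intro t sv θ
  obtain ⟨t1, v1, φ1, ψ1, e1, hθ1⟩ := hb t sv.2 θ.2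
  obtain ⟨x2, s2, Φ, ψ2, eA, hθ2⟩ :=
    (show BipullbackCond (PB.pr υ.disp (dr τ) ⋙ dl τ) σ.disp from h) ⟨v1, t1, e1.symm⟩ sv.1 (CategoryTheory.inv (X := (τ.disp.obj t).1) (Y := (τ.disp.obj t1).1) (τ.disp.map φ1).1 ≫ θ.1)
  simp only [coPre, dl, PB.pr, Functor.comp_map] at hθ2
  rw [IsIso.inv_comp_eq] at hθ2
  have hTr : (τ.disp.map Φ.r).2 = eqToHom e1 ≫ υ.disp.map Φ.l ≫ eqToHom x2.eq := by
    rw [Φ.comm]; simp [dr]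
    erw [eqToHom_trans_assoc, eqToHom_refl, Category.id_comp]
  refine ⟨x2.t, (s2, x2.s), φ1 ≫ Φ.r, (ψ2, Groupoid.inv Φ.l ≫ ψ1),
    Prod.ext eA x2.eq.symm, ?_⟩
  apply CategoryTheory.Prod.hom_ext
  · simp only [prod_comp_fst, prod_eqToHom_fst, Functor.map_comp, prodPre, Functor.prod_map]
    rw [hθ2]
    simp [dl]
  · simp only [prod_comp_snd, prod_eqToHom_snd, Functor.map_comp, prodPre, Functor.prod_map]
    rw [hθ1, hTr]
    simp [Groupoid.inv_eq_inv, Functor.map_inv, dr]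
    erw [eqToHom_trans_assoc, eqToHom_refl, Category.id_comp, IsIso.hom_inv_id_assoc]

theorem disc_app_of_disc (σ : Prestrat A) (υ : Prestrat B) (τ : Prestrat (A × B))
    (h : IsDiscreteGpd (PB τ.disp (prodPre σ υ).disp)) :
    IsDiscreteGpd (PB (appPre σ τ).disp υ.disp) := by
  show IsDiscreteGpd (PB (PB.pr σ.disp (dl τ) ⋙ dr τ) υ.disp)
  intro X Y u
  have c1 : (τ.disp.map u.l.r).1 ≫ eqToHom Y.s.eq.symm
      = eqToHom X.s.eq.symm ≫ σ.disp.map u.l.l :=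
    comm_flip _ _ _ _ u.l.comm
  have c2 : (τ.disp.map u.l.r).2 ≫ eqToHom Y.eq = eqToHom X.eq ≫ υ.disp.map u.r :=
    u.comm
  let XX : PB τ.disp (σ.disp.prod υ.disp) :=
    ⟨X.s.t, (X.s.s, X.t), Prod.ext X.s.eq.symm X.eq⟩
  let YY : PB τ.disp (σ.disp.prod υ.disp) :=
    ⟨Y.s.t, (Y.s.s, Y.t), Prod.ext Y.s.eq.symm Y.eq⟩
  let U : XX ⟶ YY := ⟨u.l.r, (u.l.l, u.r), by
    apply CategoryTheory.Prod.hom_ext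
    · simp [prodPre, prod_eqToHom_fst, prod_comp_fst]; exact c1
    · simp [prodPre, prod_eqToHom_snd, prod_comp_snd]; exact c2⟩
  obtain ⟨⟨h1, hl⟩, h2⟩ := (PB.eqH U).mp (h U)
  obtain ⟨⟨h3, hr1⟩, ⟨h4, hr2⟩⟩ := (prod_eqH U.r).mp h2
  refine (PB.eqH u).mpr ⟨(PB.eqH u.l).mpr ⟨⟨h3, hr1⟩, ⟨h1, hl⟩⟩, ⟨h4, hr2⟩⟩

theorem disc_of_app_disc (σ : Prestrat A) (υ : Prestrat B) (τ : Prestrat (A × B))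
    (h : IsDiscreteGpd (PB (appPre σ τ).disp υ.disp)) :
    IsDiscreteGpd (PB τ.disp (prodPre σ υ).disp) := by
  show IsDiscreteGpd (PB τ.disp (σ.disp.prod υ.disp))
  intro x y u
  have hA := congrArg Prod.fst u.comm
  have hB := congrArg Prod.snd u.comm
  simp only [prodPre, prod_comp_fst, prod_comp_snd, prod_eqToHom_fst, prod_eqToHom_snd,
    Functor.prod_map] at hA hB
  let V : (⟨x.t.1, x.s, (congrArg Prod.fst x.eq).symm⟩ : PB σ.disp (dl τ)) ⟶
      ⟨y.t.1, y.s, (congrArg Prod.fst y.eq).symm⟩ :=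
    ⟨(u.r).1, u.l, comm_flip _ _ _ _ hA⟩
  let U : (⟨⟨x.t.1, x.s, (congrArg Prod.fst x.eq).symm⟩, x.t.2, congrArg Prod.snd x.eq⟩ :
      PB (appPre σ τ).disp υ.disp) ⟶
      ⟨⟨y.t.1, y.s, (congrArg Prod.fst y.eq).symm⟩, y.t.2, congrArg Prod.snd y.eq⟩ :=
    ⟨V, (u.r).2, hB⟩
  obtain ⟨hV, ⟨h4, hr2⟩⟩ := (PB.eqH U).mp (h U)
  obtain ⟨⟨h3, hr1⟩, ⟨h1, hl⟩⟩ := (PB.eqH U.l).mp hV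
  refine (PB.eqH u).mpr ⟨⟨h1, hl⟩, (prod_eqH u.r).mpr ⟨⟨h3, hr1⟩, ⟨h4, hr2⟩⟩⟩

theorem disc_co_of_disc (σ : Prestrat A) (υ : Prestrat B) (τ : Prestrat (A × B))
    (h : IsDiscreteGpd (PB τ.disp (prodPre σ υ).disp)) :
    IsDiscreteGpd (PB (coPre υ τ).disp σ.disp) := by
  show IsDiscreteGpd (PB (PB.pr υ.disp (dr τ) ⋙ dl τ) σ.disp)
  intro X Y u
  have c1 : (τ.disp.map u.l.r).2 ≫ eqToHom Y.s.eq.symm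
      = eqToHom X.s.eq.symm ≫ υ.disp.map u.l.l :=
    comm_flip _ _ _ _ u.l.comm
  have c2 : (τ.disp.map u.l.r).1 ≫ eqToHom Y.eq = eqToHom X.eq ≫ σ.disp.map u.r :=
    u.comm
  let U : (⟨X.s.t, (X.t, X.s.s), Prod.ext X.eq X.s.eq.symm⟩ :
      PB τ.disp (σ.disp.prod υ.disp)) ⟶ ⟨Y.s.t, (Y.t, Y.s.s), Prod.ext Y.eq Y.s.eq.symm⟩ :=
    ⟨u.l.r, (u.r, u.l.l), by
      apply CategoryTheory.Prod.hom_ext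
      · simp [prodPre, prod_eqToHom_fst, prod_comp_fst]; exact c2
      · simp [prodPre, prod_eqToHom_snd, prod_comp_snd]; exact c1⟩
  obtain ⟨⟨h1, hl⟩, h2⟩ := (PB.eqH U).mp (h U)
  obtain ⟨⟨h3, hr1⟩, ⟨h4, hr2⟩⟩ := (prod_eqH U.r).mp h2
  refine (PB.eqH u).mpr ⟨(PB.eqH u.l).mpr ⟨⟨h4, hr2⟩, ⟨h1, hl⟩⟩, ⟨h3, hr1⟩⟩

theorem disc_of_co_disc (σ : Prestrat A) (υ : Prestrat B) (τ : Prestrat (A × B))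
    (h : IsDiscreteGpd (PB (coPre υ τ).disp σ.disp)) :
    IsDiscreteGpd (PB τ.disp (prodPre σ υ).disp) := by
  show IsDiscreteGpd (PB τ.disp (σ.disp.prod υ.disp))
  intro x y u
  have hA := congrArg Prod.fst u.comm
  have hB := congrArg Prod.snd u.comm
  simp only [prodPre, prod_comp_fst, prod_comp_snd, prod_eqToHom_fst, prod_eqToHom_snd,
    Functor.prod_map] at hA hB
  let V : (⟨x.t.2, x.s, (congrArg Prod.snd x.eq).symm⟩ : PB υ.disp (dr τ)) ⟶
      ⟨y.t.2, y.s, (congrArg Prod.snd y.eq).symm⟩ :=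
    ⟨(u.r).2, u.l, comm_flip _ _ _ _ hB⟩
  let U : (⟨⟨x.t.2, x.s, (congrArg Prod.snd x.eq).symm⟩, x.t.1, congrArg Prod.fst x.eq⟩ :
      PB (coPre υ τ).disp σ.disp) ⟶
      ⟨⟨y.t.2, y.s, (congrArg Prod.snd y.eq).symm⟩, y.t.1, congrArg Prod.fst y.eq⟩ :=
    ⟨V, (u.r).1, hA⟩
  obtain ⟨hV, ⟨h4, hr2⟩⟩ := (PB.eqH U).mp (h U)
  obtain ⟨⟨h3, hr1⟩, ⟨h1, hl⟩⟩ := (PB.eqH U.l).mp hV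
  refine (PB.eqH u).mpr ⟨⟨h1, hl⟩, (prod_eqH u.r).mpr ⟨⟨h4, hr2⟩, ⟨h3, hr1⟩⟩⟩

end Main

/-- Characterization of thin strategies from `A` to `B` (Proposition `carac_lin_thin`). -/
theorem carac_lin_thin
    {A B : Type u} [Groupoid.{u} A] [Groupoid.{u} B]
    (Aneg Apos : WideSub A) (UA TA : Set (Prestrat A))
    (hUA : perpSet (perpSet UA) = UA) (hTUA : TA ⊆ UA)
    (hTA : tperpSet (perpSet UA) (tperpSet UA TA) = TA)
    (hnegA : Aneg.pre ∈ TA) (hposA : Apos.pre ∈ tperpSet UA TA)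
    (Bneg Bpos : WideSub B) (UB TB : Set (Prestrat B))
    (hUB : perpSet (perpSet UB) = UB) (hTUB : TB ⊆ UB)
    (hTB : tperpSet (perpSet UB) (tperpSet UB TB) = TB)
    (hnegB : Bneg.pre ∈ TB) (hposB : Bpos.pre ∈ tperpSet UB TB)
    (τ : Prestrat (A × B)) (hτ : τ ∈ ULin UA UB)
    (Ss : Set (Prestrat A)) (hs : Ss ⊆ TA)
    (hgen : tperpSet (perpSet UA) (tperpSet UA Ss) = TA) :
    τ ∈ TLin UA TA UB TB ↔ ∀ σ ∈ Ss, appPre σ τ ∈ TB := by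
  constructor
  · rintro ⟨hU, hT⟩ σ hσS
    have hσTA : σ ∈ TA := hs hσS
    have hσUA : σ ∈ UA := hTUA hσTA
    rw [← hTB]
    refine ⟨?_, ?_⟩
    · intro ρ hρ
      exact bip_symm (app_perp_of_perp σ ρ τ (hU σ hσUA ρ hρ))
    · intro υ hυ
      obtain ⟨hP, hD⟩ := hT σ hσTA υ hυ
      exact ⟨bip_symm (app_perp_of_perp σ υ τ hP),
        disc_swap (disc_app_of_disc σ υ τ hD)⟩
  · intro happ
    refine ⟨hτ, ?_⟩
    intro σ' hσ' υ hυ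
    have hυUB : υ ∈ perpSet UB := hυ.1
    have hidA : idPre A ∈ UA := by rw [← hUA]; exact idPre_mem_perpSet _
    have hbr : BipullbackCond (dr τ) υ.disp :=
      dr_bip υ τ (hτ (idPre A) hidA υ hυUB)
    have hco : coPre υ τ ∈ tperpSet UA Ss := by
      refine ⟨?_, ?_⟩
      · intro ρ hρUA
        exact bip_symm (co_perp_of_perp ρ υ τ (hτ ρ hρUA υ hυUB))
      · intro σ hσS
        have hσUA : σ ∈ UA := hTUA (hs hσS)
        have happσ : appPre σ τ ∈ TB := happ σ hσS
        obtain ⟨hPerp, hDisc⟩ := hυ.2 (appPre σ τ) happσ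
        have hbl : BipullbackCond (dl τ) σ.disp :=
          dl_bip σ τ (hτ σ hσUA (idPre B) (idPre_mem_perpSet _))
        have hP1 : Perp τ (prodPre σ υ) := perp_of_app_perp σ υ τ hbl hPerp
        exact ⟨bip_symm (co_perp_of_perp σ υ τ hP1),
          disc_swap (disc_co_of_disc σ υ τ (disc_of_app_disc σ υ τ hDisc))⟩
    rw [← hgen] at hσ'
    obtain ⟨hP2, hD2⟩ := hσ'.2 (coPre υ τ) hco
    exact ⟨perp_of_co_perp σ' υ τ hbr hP2, disc_of_co_disc σ' υ τ hD2⟩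

end ThinSpan
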